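/- Let n ∈ ℕ, c ∈ ℂ \ {0}, y > 0 fixed, and let g₀, g₁ : ℝⁿ → ℂ be bounded continuous functions. Define u(x,y) := 2·(Γ((n+3)/2)/π^{(n+1)/2})·y³ ∫_{ℝⁿ} g₀(x−ξ) (|ξ|² + y²)^{−(n+3)/2} dξ + (Γ((n+1)/2)/π^{(n+1)/2})·y² ∫_{ℝⁿ} g₁(x−ξ) (|ξ|² + y²)^{−(n+1)/2} dξ. If there exists a sequence (τ_k) in ℝⁿ with |τ_k| → +∞ such that g₀(·+τ_k) → c·g₀(·) and g₁(·+τ_k) → c·g₁(·) uniformly on compact subsets of ℝⁿ, then x ↦ u(x,y) is bounded and continuous, and u(·+τ_k, y) → c·u(·, y) uniformly on compact subsets of ℝⁿ. -/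

import Mathlib

/-!
Both terms of `u(·, y)` are convolutions `x ↦ ∫ g (x - ξ) φ ξ dξ` of a bounded continuous `g`
with an integrable kernel `φ`, so they are bounded and continuous, and it suffices that such a
convolution inherits Poisson stability from `g`. Uniform convergence on a compact `K` can be
tested along sequences `x k ∈ K`. For fixed `ξ` the points `x k - ξ` stay in the compact set
`K - ξ`, so `g (x k - ξ + τ k) - c g (x k - ξ) → 0`, and dominated convergence (with the bound
`(1 + ‖c‖) sup ‖g‖ · |φ|`) carries this through the integral.
-/

open MeasureTheory Filter Topology Real

/-- The explicit solution of the Cauchy–Dirichlet problem for the biharmonic operator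
`(∂²_{x₁} + ⋯ + ∂²_{xₙ} + ∂²_y)² = 0` in the half-space `y > 0`:
`u(x,y) = 2 Γ((n+3)/2) π^{-(n+1)/2} y³ ∫ g₀(x−ξ)(|ξ|²+y²)^{-(n+3)/2} dξ
        + Γ((n+1)/2) π^{-(n+1)/2} y² ∫ g₁(x−ξ)(|ξ|²+y²)^{-(n+1)/2} dξ`. -/
noncomputable def biharmSol (n : ℕ) (y : ℝ) (g₀ g₁ : EuclideanSpace ℝ (Fin n) → ℂ)
    (x : EuclideanSpace ℝ (Fin n)) : ℂ :=
  ((2 * Real.Gamma (((n : ℝ) + 3) / 2) / Real.pi ^ (((n : ℝ) + 1) / 2) * y ^ 3 : ℝ) : ℂ) *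
      (∫ ξ : EuclideanSpace ℝ (Fin n),
        g₀ (x - ξ) * (((‖ξ‖ ^ 2 + y ^ 2) ^ (-((n : ℝ) + 3) / 2) : ℝ) : ℂ)) +
    ((Real.Gamma (((n : ℝ) + 1) / 2) / Real.pi ^ (((n : ℝ) + 1) / 2) * y ^ 2 : ℝ) : ℂ) *
      (∫ ξ : EuclideanSpace ℝ (Fin n),
        g₁ (x - ξ) * (((‖ξ‖ ^ 2 + y ^ 2) ^ (-((n : ℝ) + 1) / 2) : ℝ) : ℂ))

theorem tendstoUniformlyOn_iff_forall_tendsto_sub {ι α β : Type*} [SeminormedAddCommGroup β]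
    {p : Filter ι} {F : ι → α → β} {f : α → β} {s : Set α} :
    TendstoUniformlyOn F f p s ↔
      ∀ x : ι → α, (∀ i, x i ∈ s) → Tendsto (fun i => F i (x i) - f (x i)) p (𝓝 0) := by
  simp only [Metric.tendstoUniformlyOn_iff, Metric.tendsto_nhds, dist_eq_norm', zero_sub, norm_neg]
  refine ⟨fun h x hx ε hε => (h ε hε).mono fun i hi => hi (x i) (hx i), fun h ε hε => ?_⟩
  by_contra hbad
  rw [not_eventually] at hbad
  simp only [not_forall, not_lt, exists_prop] at hbad
  obtain ⟨-, x₀, hx₀, -⟩ := hbad.exists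
  classical
  -- a witness of non-uniformity at every index that has one
  let x : ι → α := fun i => if hi : ∃ x ∈ s, ε ≤ ‖F i x - f x‖ then hi.choose else x₀
  have hx : ∀ i, x i ∈ s := fun i => by
    by_cases hi : ∃ x ∈ s, ε ≤ ‖F i x - f x‖
    · simpa [x, hi] using hi.choose_spec.1
    · simpa [x, hi] using hx₀
  obtain ⟨i, hi, hsmall⟩ := (hbad.and_eventually (h x hx ε hε)).exists
  simp only [x, hi, dite_true] at hsmall
  exact absurd hi.choose_spec.2 (not_le.mpr hsmall)

theorem integrable_rpow_neg_norm_sq_add_sq {E : Type*} [NormedAddCommGroup E]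
    [InnerProductSpace ℝ E] [FiniteDimensional ℝ E] [MeasurableSpace E] [BorelSpace E]
    (μ : Measure E) [μ.IsAddHaarMeasure] {y s : ℝ} (hy : y ≠ 0)
    (hs : (Module.finrank ℝ E : ℝ) < s) :
    Integrable (fun ξ : E => (‖ξ‖ ^ 2 + y ^ 2) ^ (-s / 2)) μ := by
  set m : ℝ := min 1 (y ^ 2)
  have hm : 0 < m := lt_min one_pos (by positivity)
  have hs0 : 0 < s := (Nat.cast_nonneg _).trans_lt hs
  refine ((integrable_rpow_neg_one_add_norm_sq (μ := μ) hs).const_mul (m ^ (-s / 2))).mono'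
    (Measurable.aestronglyMeasurable (by fun_prop)) (.of_forall fun ξ => ?_)
  have hle : m * (1 + ‖ξ‖ ^ 2) ≤ ‖ξ‖ ^ 2 + y ^ 2 := by
    nlinarith [min_le_left 1 (y ^ 2), min_le_right 1 (y ^ 2), sq_nonneg ‖ξ‖]
  rw [Real.norm_of_nonneg (by positivity), ← Real.mul_rpow hm.le (by positivity)]
  exact Real.rpow_le_rpow_of_nonpos (by positivity) hle (by linarith)

section PoissonStability

variable {E : Type*} [TopologicalSpace E] [Add E]

/-- Uniform Poisson `c`-stability of `F`, along a fixed sequence of shifts `τ`. -/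
def IsPoissonStable (c : ℂ) (τ : ℕ → E) (F : E → ℂ) : Prop :=
  ∀ K : Set E, IsCompact K →
    TendstoUniformlyOn (fun k x => F (x + τ k)) (fun x => c * F x) atTop K

variable {c : ℂ} {τ : ℕ → E} {F G : E → ℂ}

theorem IsPoissonStable.const_mul (hF : IsPoissonStable c τ F) (a : ℂ) :
    IsPoissonStable c τ (fun x => a * F x) := fun K hK =>
  ((uniformContinuous_const_smul a).comp_tendstoUniformlyOn (hF K hK)).congr_right
    fun x _ => by simp only [Function.comp_apply, smul_eq_mul]; ring

theorem IsPoissonStable.add (hF : IsPoissonStable c τ F) (hG : IsPoissonStable c τ G) :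
    IsPoissonStable c τ (fun x => F x + G x) := fun K hK =>
  ((hF K hK).fun_add (hG K hK)).congr_right fun x _ => (mul_add c (F x) (G x)).symm

end PoissonStability

theorem norm_mul_ofReal_le {α : Type*} {g : α → ℂ} {C : ℝ} (hgb : ∀ x, ‖g x‖ ≤ C) (z : α)
    (t : ℝ) :
    ‖g z * (t : ℂ)‖ ≤ C * ‖t‖ := by
  rw [norm_mul, Complex.norm_real]
  exact mul_le_mul_of_nonneg_right (hgb z) (norm_nonneg t)

section KernelConvolution

variable {E : Type*} [NormedAddCommGroup E] [MeasurableSpace E]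
  {μ : Measure E} {φ : E → ℝ} {g : E → ℂ} {C : ℝ}

noncomputable def kernelConv (μ : Measure E) (φ : E → ℝ) (g : E → ℂ) (x : E) : ℂ :=
  ∫ ξ, g (x - ξ) * (φ ξ : ℂ) ∂μ

theorem norm_kernelConv_le (hφ : Integrable φ μ) (hgb : ∀ x, ‖g x‖ ≤ C) (x : E) :
    ‖kernelConv μ φ g x‖ ≤ C * ∫ ξ, ‖φ ξ‖ ∂μ := by
  rw [← integral_const_mul]
  exact norm_integral_le_of_norm_le (hφ.norm.const_mul C)
    (.of_forall fun ξ => norm_mul_ofReal_le hgb _ _)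

variable [OpensMeasurableSpace E]

theorem integrable_kernelConv_integrand (hφ : Integrable φ μ) (hg : Continuous g)
    (hgb : ∀ x, ‖g x‖ ≤ C) (x : E) : Integrable (fun ξ => g (x - ξ) * (φ ξ : ℂ)) μ :=
  hφ.ofReal.bdd_mul (by fun_prop : Continuous fun ξ => g (x - ξ)).aestronglyMeasurable
    (.of_forall fun ξ => hgb (x - ξ))

theorem continuous_kernelConv (hφ : Integrable φ μ) (hg : Continuous g)
    (hgb : ∀ x, ‖g x‖ ≤ C) : Continuous (kernelConv μ φ g) :=
  continuous_of_dominated (fun x => (integrable_kernelConv_integrand hφ hg hgb x).1)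
    (fun x => .of_forall fun ξ => norm_mul_ofReal_le hgb _ _) (hφ.norm.const_mul C)
    (.of_forall fun ξ => by fun_prop)

theorem kernelConv_add_sub_const_mul (hφ : Integrable φ μ) (hg : Continuous g)
    (hgb : ∀ x, ‖g x‖ ≤ C) (c : ℂ) (x τ : E) :
    kernelConv μ φ g (x + τ) - c * kernelConv μ φ g x =
      ∫ ξ, (g (x - ξ + τ) - c * g (x - ξ)) * (φ ξ : ℂ) ∂μ := by
  rw [kernelConv, kernelConv, ← integral_const_mul, ← integral_sub
    (integrable_kernelConv_integrand hφ hg hgb _)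
    ((integrable_kernelConv_integrand hφ hg hgb x).const_mul c)]
  congr 1 with ξ
  rw [sub_add_eq_add_sub]
  ring

theorem IsPoissonStable.kernelConv {c : ℂ} {τ : ℕ → E} (hφ : Integrable φ μ)
    (hg : Continuous g) (hgb : ∀ x, ‖g x‖ ≤ C) (hstab : IsPoissonStable c τ g) :
    IsPoissonStable c τ (kernelConv μ φ g) := by
  intro K hK
  rw [tendstoUniformlyOn_iff_forall_tendsto_sub]
  intro x hx
  simp_rw [kernelConv_add_sub_const_mul hφ hg hgb]
  rw [← integral_zero E ℂ]
  refine tendsto_integral_of_dominated_convergence (fun ξ => (C + ‖c‖ * C) * ‖φ ξ‖)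
    (fun k => by fun_prop) (hφ.norm.const_mul _) (fun k => .of_forall fun ξ => ?_)
    (.of_forall fun ξ => ?_)
  · refine norm_mul_ofReal_le (g := fun z => g (z + τ k) - c * g z) (fun z => ?_) _ _
    exact (norm_sub_le _ _).trans (add_le_add (hgb _) (by rw [norm_mul]; gcongr; exact hgb z))
  · have hK' : IsCompact ((· - ξ) '' K) := hK.image (by fun_prop)
    have := (tendstoUniformlyOn_iff_forall_tendsto_sub.mp (hstab _ hK'))
      (fun k => x k - ξ) (fun k => Set.mem_image_of_mem _ (hx k))
    simpa using this.mul_const (φ ξ : ℂ)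

end KernelConvolution

theorem stmt17_general (n : ℕ) (c : ℂ) (y : ℝ) (hy : 0 < y)
    (g₀ g₁ : EuclideanSpace ℝ (Fin n) → ℂ)
    (hg₀c : Continuous g₀) (hg₁c : Continuous g₁)
    (hg₀b : ∃ C, ∀ x, ‖g₀ x‖ ≤ C) (hg₁b : ∃ C, ∀ x, ‖g₁ x‖ ≤ C)
    (τ : ℕ → EuclideanSpace ℝ (Fin n))
    (hrec₀ : ∀ K : Set (EuclideanSpace ℝ (Fin n)), IsCompact K →
      TendstoUniformlyOn (fun k x => g₀ (x + τ k)) (fun x => c * g₀ x) atTop K)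
    (hrec₁ : ∀ K : Set (EuclideanSpace ℝ (Fin n)), IsCompact K →
      TendstoUniformlyOn (fun k x => g₁ (x + τ k)) (fun x => c * g₁ x) atTop K) :
    Continuous (biharmSol n y g₀ g₁) ∧
    (∃ C, ∀ x, ‖biharmSol n y g₀ g₁ x‖ ≤ C) ∧
    ∀ K : Set (EuclideanSpace ℝ (Fin n)), IsCompact K →
      TendstoUniformlyOn (fun k x => biharmSol n y g₀ g₁ (x + τ k))
        (fun x => c * biharmSol n y g₀ g₁ x) atTop K := by
  obtain ⟨C₀, hC₀⟩ := hg₀b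
  obtain ⟨C₁, hC₁⟩ := hg₁b
  have hφ : ∀ s : ℝ, (n : ℝ) < s → Integrable
      (fun ξ : EuclideanSpace ℝ (Fin n) => (‖ξ‖ ^ 2 + y ^ 2) ^ (-s / 2)) := fun s hs =>
    integrable_rpow_neg_norm_sq_add_sq volume hy.ne' (by rwa [finrank_euclideanSpace_fin])
  have hφ₀ := hφ (n + 3) (by linarith)
  have hφ₁ := hφ (n + 1) (by linarith)
  -- `biharmSol` unfolds definitionally to `a₀ * kernelConv φ₀ g₀ + a₁ * kernelConv φ₁ g₁`
  refine ⟨?_, ?_, ?_⟩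
  · exact (continuous_const.mul (continuous_kernelConv hφ₀ hg₀c hC₀)).add
      (continuous_const.mul (continuous_kernelConv hφ₁ hg₁c hC₁))
  · exact ⟨_, fun x => (norm_add_le _ _).trans (add_le_add
      (norm_mul_le_of_le le_rfl (norm_kernelConv_le hφ₀ hC₀ x))
      (norm_mul_le_of_le le_rfl (norm_kernelConv_le hφ₁ hC₁ x)))⟩
  · exact ((IsPoissonStable.kernelConv hφ₀ hg₀c hC₀ hrec₀).const_mul _).add
      ((IsPoissonStable.kernelConv hφ₁ hg₁c hC₁ hrec₁).const_mul _)

/-- If `g₀, g₁` are bounded, continuous and uniformly Poisson `c`-stable with the common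
sequence `(τ_k)`, then for each fixed `y > 0` the solution `u(·, y)` of the biharmonic
Cauchy–Dirichlet problem is bounded, continuous and uniformly Poisson `c`-stable with
the same sequence. -/
theorem stmt17 (n : ℕ) (c : ℂ) (hc : c ≠ 0) (y : ℝ) (hy : 0 < y)
    (g₀ g₁ : EuclideanSpace ℝ (Fin n) → ℂ)
    (hg₀c : Continuous g₀) (hg₁c : Continuous g₁)
    (hg₀b : ∃ C, ∀ x, ‖g₀ x‖ ≤ C) (hg₁b : ∃ C, ∀ x, ‖g₁ x‖ ≤ C)
    (τ : ℕ → EuclideanSpace ℝ (Fin n)) (hτ : Tendsto (fun k => ‖τ k‖) atTop atTop)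
    (hrec₀ : ∀ K : Set (EuclideanSpace ℝ (Fin n)), IsCompact K →
      TendstoUniformlyOn (fun k x => g₀ (x + τ k)) (fun x => c * g₀ x) atTop K)
    (hrec₁ : ∀ K : Set (EuclideanSpace ℝ (Fin n)), IsCompact K →
      TendstoUniformlyOn (fun k x => g₁ (x + τ k)) (fun x => c * g₁ x) atTop K) :
    Continuous (biharmSol n y g₀ g₁) ∧
    (∃ C, ∀ x, ‖biharmSol n y g₀ g₁ x‖ ≤ C) ∧
    ∀ K : Set (EuclideanSpace ℝ (Fin n)), IsCompact K →
      TendstoUniformlyOn (fun k x => biharmSol n y g₀ g₁ (x + τ k))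
        (fun x => c * biharmSol n y g₀ g₁ x) atTop K :=
  stmt17_general n c y hy g₀ g₁ hg₀c hg₁c hg₀b hg₁b τ hrec₀ hrec₁
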